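/- arXiv:2510.22305 — 4 statements merged into one kernel-verified Lean document; each statement's English description precedes it below -/
import Mathlib

section
/- Let H be a complex Hilbert space and L a bounded dissipative operator on H (Re⟨x, Lx⟩ ≤ 0 for all x) with ker(L) ≠ H. Define the singular value gap s(L) := inf{ ‖Lx‖ : x ∈ ker(L)^⊥, ‖x‖ = 1 }, and let P_∞ denote the orthogonal projection onto ker(L). If the semigroup exp(tL) is hypocoercive with constants C ≥ 1 and ν > 0, i.e. ‖exp(tL)x − P_∞ x‖ ≤ C e^{−νt} ‖x − P_∞ x‖ for all t ≥ 0 and x ∈ H, then ν ≤ (1 + log C) · s(L). -/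
/-!
Take `x ⊥ ker L`. Dissipativity forces `ran L ⊥ ker L`, so `P∞` kills both `x` and `L x`, and
hypocoercivity gives `‖e^{tL} x‖ ≤ C e^{-νt} ‖x‖` and `‖e^{tL} L x‖ ≤ C e^{-νt} ‖L x‖`, while
contractivity gives `‖e^{tL} L x‖ ≤ ‖L x‖`. Since `e^{tL} L x` is the derivative of `e^{tL} x`,
using the constant bound up to `t₀ = log C / ν` and the exponential one afterwards yields
`‖x - e^{tL} x‖ ≤ (t₀ + 1/ν) ‖L x‖` for all `t`; letting `t → ∞` gives
`ν ‖x‖ ≤ (1 + log C) ‖L x‖`, and taking the infimum over unit vectors proves the claim.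
-/

open Filter Topology NormedSpace

section Dissipative

variable {𝕜 E : Type*} [RCLike 𝕜] [NormedAddCommGroup E] [InnerProductSpace 𝕜 E]

lemma inner_apply_eq_zero_of_dissipative (L : E →ₗ[𝕜] E)
    (hdiss : ∀ x : E, RCLike.re (inner 𝕜 x (L x)) ≤ 0) {z : E} (hz : L z = 0) (h : E) :
    inner 𝕜 z (L h) = 0 := by
  set w := inner 𝕜 z (L h)
  set q := RCLike.re (inner 𝕜 h (L h))
  have hq : 0 < 1 - q := by linarith [hdiss h]
  set τ := (1 - q)⁻¹ with hτ_def
  have hτ : 0 < τ := inv_pos.2 hq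
  -- Dissipativity at `z + c • h`, `c = τ * conj w`, reads `τ ‖w‖² (1 + τ q) ≤ 0`,
  -- and `τ = (1 - q)⁻¹` makes `1 + τ q = τ > 0`.
  have hre : RCLike.re (inner 𝕜 (z + ((τ : 𝕜) * starRingEnd 𝕜 w) • h)
      (L (z + ((τ : 𝕜) * starRingEnd 𝕜 w) • h))) = τ * ‖w‖ ^ 2 * (1 + τ * q) := by
    simp only [map_add, map_smul, hz, zero_add, inner_add_left, inner_smul_left,
      inner_smul_right, map_mul, RCLike.conj_ofReal, RCLike.conj_conj]
    rw [show (τ : 𝕜) * starRingEnd 𝕜 w * (w + τ * w * inner 𝕜 h (L h)) =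
        ((τ * ‖w‖ ^ 2 : ℝ) : 𝕜) * (1 + τ * inner 𝕜 h (L h)) by
      push_cast; rw [← RCLike.conj_mul]; ring, RCLike.re_ofReal_mul]
    simp [q]
  have hτq : 1 + τ * q = τ := by rw [hτ_def]; field_simp; ring
  have := hdiss (z + ((τ : 𝕜) * starRingEnd 𝕜 w) • h)
  rw [hre, hτq] at this
  have : ‖w‖ ^ 2 ≤ 0 := by nlinarith [mul_pos hτ hτ]
  simpa using this

lemma range_le_orthogonal_ker_of_dissipative (L : E →ₗ[𝕜] E)
    (hdiss : ∀ x : E, RCLike.re (inner 𝕜 x (L x)) ≤ 0) :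
    LinearMap.range L ≤ (LinearMap.ker L)ᗮ := by
  rintro _ ⟨h, rfl⟩
  exact (Submodule.mem_orthogonal _ _).2 fun z hz =>
    inner_apply_eq_zero_of_dissipative L hdiss hz h

lemma apply_eq_zero_of_mem_orthogonal {K : Submodule 𝕜 E} {P : E → E}
    (hPmem : ∀ x, P x ∈ K) (hPorth : ∀ x, x - P x ∈ Kᗮ) {y : E} (hy : y ∈ Kᗮ) : P y = 0 := by
  have hPy : P y ∈ Kᗮ := by simpa using Kᗮ.sub_mem hy (hPorth y)
  exact Submodule.disjoint_def.1 K.orthogonal_disjoint _ (hPmem y) hPy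

lemma exists_mem_orthogonal_norm_eq_one {K : Submodule 𝕜 E} [K.HasOrthogonalProjection]
    (hK : K ≠ ⊤) : ∃ x ∈ Kᗮ, ‖x‖ = 1 := by
  obtain ⟨v, hv, hv0⟩ := Submodule.exists_mem_ne_zero_of_ne_bot (mt K.orthogonal_eq_bot_iff.1 hK)
  exact ⟨(‖v‖⁻¹ : 𝕜) • v, Kᗮ.smul_mem _ hv, norm_smul_inv_norm hv0⟩

end Dissipative

section Calculus

variable {E : Type*} [NormedAddCommGroup E] [NormedSpace ℝ E]

lemma norm_sub_le_of_norm_deriv_le_exp {f f' : ℝ → E} {K ν t₀ t : ℝ} (hν : 0 < ν)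
    (hf : ∀ s, HasDerivAt f (f' s) s) (hbound : ∀ s ≥ t₀, ‖f' s‖ ≤ K * Real.exp (-ν * s))
    (ht : t₀ ≤ t) : ‖f t - f t₀‖ ≤ K * Real.exp (-ν * t₀) / ν := by
  have hK : 0 ≤ K := (mul_nonneg_iff_of_pos_right (Real.exp_pos _)).1
    ((norm_nonneg _).trans (hbound t₀ le_rfl))
  have hB : ∀ s, HasDerivAt (fun s => K / ν * (Real.exp (-ν * t₀) - Real.exp (-ν * s)))
      (K * Real.exp (-ν * s)) s := fun s => by
    refine ((((hasDerivAt_id s).const_mul (-ν)).exp.const_sub _).const_mul (K / ν)).congr_deriv ?_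
    field_simp
    simp
  have := image_norm_le_of_norm_deriv_right_le_deriv_boundary (f := fun s => f s - f t₀)
    (fun s _ => ((hf s).sub_const (f t₀)).continuousAt.continuousWithinAt)
    (fun s _ => ((hf s).sub_const (f t₀)).hasDerivWithinAt) (by simp) hB
    (fun s hs => hbound s hs.1) ⟨ht, le_rfl⟩
  refine this.trans ?_
  rw [mul_div_right_comm]
  exact mul_le_mul_of_nonneg_left (sub_le_self _ (Real.exp_pos _).le) (div_nonneg hK hν.le)

lemma mul_norm_le_of_tendsto_zero_of_norm_deriv_le {g g' : ℝ → E} {a C ν : ℝ} (hC : 1 ≤ C)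
    (hν : 0 < ν) (hg : ∀ s, HasDerivAt g (g' s) s) (hg'_le : ∀ s ≥ 0, ‖g' s‖ ≤ a)
    (hg'_le_exp : ∀ s ≥ 0, ‖g' s‖ ≤ C * Real.exp (-ν * s) * a)
    (hlim : Tendsto g atTop (𝓝 0)) : ν * ‖g 0‖ ≤ (1 + Real.log C) * a := by
  -- `t₀` is where the two bounds on `‖g'‖` cross.
  set t₀ := Real.log C / ν with ht₀_def
  have ht₀ : 0 ≤ t₀ := div_nonneg (Real.log_nonneg hC) hν.le
  have hCt₀ : C * Real.exp (-ν * t₀) = 1 := by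
    rw [show -ν * t₀ = -Real.log C by rw [ht₀_def]; field_simp, Real.exp_neg,
      Real.exp_log (zero_lt_one.trans_le hC), mul_inv_cancel₀ (by linarith)]
  have early : ‖g t₀ - g 0‖ ≤ a * t₀ := by
    simpa using norm_image_sub_le_of_norm_deriv_le_segment' (fun s _ => (hg s).hasDerivWithinAt)
      (fun s hs => hg'_le s hs.1) t₀ ⟨ht₀, le_rfl⟩
  have late : ∀ t ≥ t₀, ‖g t - g t₀‖ ≤ a / ν := fun t ht => by
    have := norm_sub_le_of_norm_deriv_le_exp (K := C * a) hν hg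
      (fun s hs => (hg'_le_exp s (ht₀.trans hs)).trans_eq (by ring)) ht
    rwa [mul_right_comm, hCt₀, one_mul] at this
  have hg0 : ‖g 0‖ ≤ a / ν + a * t₀ := by
    have : Tendsto (fun t => ‖g t - g 0‖) atTop (𝓝 ‖g 0‖) := by
      simpa using (hlim.sub_const (g 0)).norm
    refine le_of_tendsto this ((eventually_ge_atTop t₀).mono fun t ht => ?_)
    exact (norm_sub_le_norm_sub_add_norm_sub _ (g t₀) _).trans (add_le_add (late t ht) early)
  calc ν * ‖g 0‖ ≤ ν * (a / ν + a * t₀) := mul_le_mul_of_nonneg_left hg0 hν.le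
    _ = (1 + Real.log C) * a := by rw [ht₀_def]; field_simp

end Calculus

section Semigroup

variable {H : Type*} [NormedAddCommGroup H] [InnerProductSpace ℂ H] [CompleteSpace H]

lemma hasDerivAt_exp_smul_apply (L : H →L[ℂ] H) (y : H) (t : ℝ) :
    HasDerivAt (fun s : ℝ => exp (s • L) y) (exp (t • L) (L y)) t := by
  simpa [Function.comp_def] using
    ((ContinuousLinearMap.apply ℂ H y).restrictScalars ℝ).hasFDerivAt.comp_hasDerivAt t
      (hasDerivAt_exp_smul_const L t)

lemma norm_exp_smul_apply_le_of_dissipative (L : H →L[ℂ] H)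
    (hdiss : ∀ x : H, (inner ℂ x (L x)).re ≤ 0) (y : H) {t : ℝ} (ht : 0 ≤ t) :
    ‖exp (t • L) y‖ ≤ ‖y‖ := by
  have hderiv : ∀ s : ℝ, HasDerivAt (fun s : ℝ => ‖exp (s • L) y‖ ^ 2)
      (2 * (inner ℂ (exp (s • L) y) (L (exp (s • L) y))).re) s := fun s => by
    let := InnerProductSpace.complexToReal (G := H)
    have := (hasDerivAt_exp_smul_apply L y s).norm_sq
    have hcomm : exp (s • L) (L y) = L (exp (s • L) y) :=
      DFunLike.congr_fun ((Commute.refl L).smul_left s).exp_left.eq y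
    rwa [real_inner_eq_re_inner ℂ, hcomm] at this
  have hanti : Antitone fun s : ℝ => ‖exp (s • L) y‖ ^ 2 :=
    antitone_of_deriv_nonpos (fun s => (hderiv s).differentiableAt) fun s => by
      rw [(hderiv s).deriv]
      linarith [hdiss (exp (s • L) y)]
  simpa using pow_le_pow_iff_left₀ (norm_nonneg _) (norm_nonneg _) two_ne_zero |>.1 (hanti ht)

lemma mul_norm_le_of_hypocoercive (L : H →L[ℂ] H) (hdiss : ∀ x : H, (inner ℂ x (L x)).re ≤ 0)
    {P : H → H} (hPmem : ∀ x, P x ∈ LinearMap.ker (L : H →ₗ[ℂ] H))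
    (hPorth : ∀ x, x - P x ∈ (LinearMap.ker (L : H →ₗ[ℂ] H))ᗮ) {C ν : ℝ} (hC : 1 ≤ C) (hν : 0 < ν)
    (hhypo : ∀ t : ℝ, 0 ≤ t → ∀ x : H,
      ‖exp (t • L) x - P x‖ ≤ C * Real.exp (-ν * t) * ‖x - P x‖)
    {x : H} (hx : x ∈ (LinearMap.ker (L : H →ₗ[ℂ] H))ᗮ) : ν * ‖x‖ ≤ (1 + Real.log C) * ‖L x‖ := by
  have hdecay : ∀ y, y ∈ (LinearMap.ker (L : H →ₗ[ℂ] H))ᗮ → ∀ t ≥ 0,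
      ‖exp (t • L) y‖ ≤ C * Real.exp (-ν * t) * ‖y‖ := fun y hy t ht => by
    simpa [apply_eq_zero_of_mem_orthogonal hPmem hPorth hy] using hhypo t ht y
  have hLx : L x ∈ (LinearMap.ker (L : H →ₗ[ℂ] H))ᗮ :=
    range_le_orthogonal_ker_of_dissipative (L : H →ₗ[ℂ] H) hdiss ⟨x, rfl⟩
  have hlim : Tendsto (fun t : ℝ => C * Real.exp (-ν * t) * ‖x‖) atTop (𝓝 0) := by
    simpa using ((Real.tendsto_exp_atBot.comp
      (tendsto_id.const_mul_atTop_of_neg (neg_lt_zero.2 hν))).const_mul C).mul_const ‖x‖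
  simpa using mul_norm_le_of_tendsto_zero_of_norm_deriv_le hC hν (hasDerivAt_exp_smul_apply L x)
    (fun s hs => norm_exp_smul_apply_le_of_dissipative L hdiss (L x) hs)
    (fun s hs => hdecay (L x) hLx s hs)
    (squeeze_zero_norm' ((eventually_ge_atTop 0).mono fun t ht => hdecay x hx t ht) hlim)

end Semigroup

/-- For a bounded dissipative operator `L` with `ker L ≠ H`, if the semigroup
`exp(tL)` is hypocoercive with constants `C ≥ 1`, `ν > 0`, then
`ν ≤ (1 + log C) · s(L)`, where `s(L) = inf{‖Lx‖ : x ∈ ker(L)ᗮ, ‖x‖ = 1}` is the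
singular value gap and `P∞` is the orthogonal projection onto `ker L`. -/
theorem hypocoercive_rate_le_singular_value_gap
    {H : Type*} [NormedAddCommGroup H] [InnerProductSpace ℂ H] [CompleteSpace H]
    (L : H →L[ℂ] H)
    (hdiss : ∀ x : H, (inner ℂ x (L x) : ℂ).re ≤ 0)
    (hker : (LinearMap.ker (L : H →ₗ[ℂ] H) : Submodule ℂ H) ≠ ⊤)
    (Pinf : H →L[ℂ] H)
    (hPmem : ∀ x : H, Pinf x ∈ LinearMap.ker (L : H →ₗ[ℂ] H))
    (hPorth : ∀ x : H, x - Pinf x ∈ (LinearMap.ker (L : H →ₗ[ℂ] H) : Submodule ℂ H)ᗮ)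
    (C ν : ℝ) (hC : 1 ≤ C) (hν : 0 < ν)
    (hhypo : ∀ t : ℝ, 0 ≤ t → ∀ x : H,
      ‖NormedSpace.exp (t • L) x - Pinf x‖ ≤ C * Real.exp (-ν * t) * ‖x - Pinf x‖) :
    ν ≤ (1 + Real.log C) *
      sInf {r : ℝ | ∃ x : H, x ∈ (LinearMap.ker (L : H →ₗ[ℂ] H) : Submodule ℂ H)ᗮ ∧ ‖x‖ = 1 ∧ r = ‖L x‖} := by
  have hlog : 0 < 1 + Real.log C := by linarith [Real.log_nonneg hC]
  have : CompleteSpace (LinearMap.ker (L : H →ₗ[ℂ] H)) := L.isClosed_ker.completeSpace_coe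
  obtain ⟨x₀, hx₀, hx₀_norm⟩ := exists_mem_orthogonal_norm_eq_one hker
  rw [← div_le_iff₀' hlog]
  refine le_csInf ⟨_, x₀, hx₀, hx₀_norm, rfl⟩ ?_
  rintro _ ⟨x, hx, hx_norm, rfl⟩
  rw [div_le_iff₀' hlog]
  simpa [hx_norm] using mul_norm_le_of_hypocoercive L hdiss hPmem hPorth hC hν hhypo hx
end

section
/- Let H be a complex Hilbert space, let L_s be a bounded self-adjoint operator on H with ⟨x, L_s x⟩ ≤ 0 for all x, and let L_a be a bounded dissipative operator on H (Re⟨x, L_a x⟩ ≤ 0 for all x). For any γ > 0, set L_γ := L_a + γ L_s. Then for every x ∈ H, L_γ x = 0 if and only if L_s x = 0 and L_a x = 0. -/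
/-!
Pairing `L_γ x = 0` with `x` gives `Re⟪x, L_a x⟫ + γ Re⟪x, L_s x⟫ = 0`, a sum of two
nonpositive terms, so `Re⟪x, L_s x⟫ = 0`. Since `-L_s` is a positive operator it is `S† S`
for some `S`, so `‖S x‖² = 0` and `L_s x = -S† S x = 0`; then
`L_a x = L_γ x - γ L_s x = 0`.
-/

open scoped InnerProductSpace

namespace ContinuousLinearMap

variable {H : Type*} [NormedAddCommGroup H] [InnerProductSpace ℂ H] [CompleteSpace H]

theorem IsPositive.apply_eq_zero_of_re_inner_eq_zero {T : H →L[ℂ] H} (hT : T.IsPositive)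
    {x : H} (hx : (⟪x, T x⟫_ℂ).re = 0) : T x = 0 := by
  obtain ⟨S, rfl⟩ :=
    CStarAlgebra.nonneg_iff_eq_star_mul_self.mp ((nonneg_iff_isPositive T).mpr hT)
  have hSx : S x = 0 := by
    rw [mul_def, comp_apply, star_eq_adjoint, adjoint_inner_right,
      inner_self_eq_norm_sq_to_K] at hx
    simpa [← Complex.ofReal_pow] using hx
  simp [hSx]

theorem isPositive_neg_of_re_inner_nonpos {T : H →L[ℂ] H} (hT : IsSelfAdjoint T)
    (h : ∀ x, (⟪x, T x⟫_ℂ).re ≤ 0) : (-T).IsPositive := by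
  refine isPositive_def'.mpr ⟨hT.neg, fun x => ?_⟩
  rw [reApplyInnerSelf, neg_apply, inner_neg_left, map_neg, ← inner_conj_symm, RCLike.conj_re]
  exact neg_nonneg.mpr (h x)

end ContinuousLinearMap

open ContinuousLinearMap in
/-- For `L_γ = L_a + γ L_s` with `L_s` self-adjoint negative semidefinite
and `L_a` dissipative, `L_γ x = 0` iff `L_s x = 0` and `L_a x = 0`. -/
theorem kernel_of_hypocoercive_generator
    {H : Type*} [NormedAddCommGroup H] [InnerProductSpace ℂ H] [CompleteSpace H]
    (Ls La : H →L[ℂ] H)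
    (hLs_sa : IsSelfAdjoint Ls)
    (hLs_neg : ∀ x : H, (inner ℂ x (Ls x) : ℂ).re ≤ 0)
    (hLa_diss : ∀ x : H, (inner ℂ x (La x) : ℂ).re ≤ 0)
    (γ : ℝ) (hγ : 0 < γ) :
    ∀ x : H, (La + (γ : ℂ) • Ls) x = 0 ↔ Ls x = 0 ∧ La x = 0 := by
  intro x
  refine ⟨fun h => ?_, fun ⟨hs, ha⟩ => by simp [hs, ha]⟩
  have h_re : (inner ℂ x (La x) : ℂ).re + γ * (inner ℂ x (Ls x) : ℂ).re = 0 := by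
    simpa [inner_add_right, inner_smul_right] using congrArg (fun y => (inner ℂ x y).re) h
  have hs_re : (inner ℂ x (Ls x) : ℂ).re = 0 := by
    nlinarith [hLa_diss x, hLs_neg x]
  have hs : Ls x = 0 := by
    simpa using (isPositive_neg_of_re_inner_nonpos hLs_sa hLs_neg).apply_eq_zero_of_re_inner_eq_zero
      (by simpa using hs_re)
  exact ⟨hs, by simpa [hs] using h⟩
end

section
/- Let H be a complex Hilbert space and L a bounded operator on H, let P_∞ denote the orthogonal projection onto ker(L), and let ν > 0. Suppose the semigroup exp(tL) decays exponentially with prefactor C = 1: ‖exp(tL)x − P_∞ x‖ ≤ e^{−νt} ‖x − P_∞ x‖ for all t ≥ 0 and all x ∈ H. Then L is coercive on ker(L)^⊥: Re⟨x, Lx⟩ ≤ −ν ‖x‖² for every x ∈ ker(L)^⊥. -/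
/-!
For `x ∈ ker(L)ᗮ` the projection `P∞ x` vanishes, so the decay bound says
`‖exp(tL) x‖² ≤ e^{-2νt} ‖x‖²` for `t ≥ 0`, with equality at `t = 0`. Comparing the right
derivatives of both sides at `t = 0` gives `2 Re⟨x, Lx⟩ ≤ -2ν ‖x‖²`.
-/

open NormedSpace Set
open scoped InnerProductSpace

theorem Submodule.eq_zero_of_mem_of_sub_mem_orthogonal {𝕜 E : Type*} [RCLike 𝕜]
    [NormedAddCommGroup E] [InnerProductSpace 𝕜 E] {K : Submodule 𝕜 E} {x p : E}
    (hp : p ∈ K) (hx : x ∈ Kᗮ) (hxp : x - p ∈ Kᗮ) : p = 0 := by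
  have hp' : p ∈ Kᗮ := by simpa using Kᗮ.sub_mem hx hxp
  exact Submodule.disjoint_def.1 K.orthogonal_disjoint p hp hp'

theorem HasDerivWithinAt.le_of_le_of_eq_Ici {f g : ℝ → ℝ} {f' g' a : ℝ}
    (hf : HasDerivWithinAt f f' (Ici a) a) (hg : HasDerivWithinAt g g' (Ici a) a)
    (hfg : ∀ t ∈ Ici a, f t ≤ g t) (ha : f a = g a) : f' ≤ g' := by
  have hmax : IsLocalMaxOn (f - g) (Ici a) a :=
    Filter.eventually_of_mem self_mem_nhdsWithin fun t ht => by
      simpa [ha] using hfg t ht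
  have hcone : (1 : ℝ) ∈ posTangentConeAt (Ici a) a :=
    mem_posTangentConeAt_of_segment_subset (by simp [segment_eq_Icc, Icc_subset_Ici_self])
  simpa [sub_nonpos] using hmax.hasFDerivWithinAt_nonpos (hf.sub hg).hasFDerivWithinAt hcone

theorem HasDerivAt.norm_sq_of_rclike {𝕜 E : Type*} [RCLike 𝕜] [NormedAddCommGroup E]
    [InnerProductSpace 𝕜 E] [NormedSpace ℝ E] {f : ℝ → E} {f' : E} {t : ℝ}
    (hf : HasDerivAt f f' t) :
    HasDerivAt (fun s => ‖f s‖ ^ 2) (2 * RCLike.re ⟪f t, f'⟫_𝕜) t := by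
  have h := (RCLike.reCLM (K := 𝕜)).hasFDerivAt.comp_hasDerivAt t (hf.inner 𝕜 hf)
  refine (h.congr_deriv ?_).congr_of_eventuallyEq (Filter.Eventually.of_forall fun s => ?_)
  · simp only [RCLike.reCLM_apply, map_add]
    rw [← inner_conj_symm (f t) f', RCLike.conj_re]
    ring
  · simp

section

variable {E : Type*} [NormedAddCommGroup E] [InnerProductSpace ℂ E] [CompleteSpace E]

theorem hasDerivAt_exp_smul_const_apply (A : E →L[ℂ] E) (x : E) (t : ℝ) :
    HasDerivAt (fun s : ℝ => exp (s • A) x) (exp (t • A) (A x)) t :=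
  ((ContinuousLinearMap.apply ℂ E x).restrictScalars ℝ).hasFDerivAt.comp_hasDerivAt t
    (hasDerivAt_exp_smul_const A t)

theorem re_inner_apply_le_of_norm_exp_smul_apply_le {A : E →L[ℂ] E} {x : E} {ν : ℝ}
    (hdecay : ∀ t : ℝ, 0 ≤ t → ‖exp (t • A) x‖ ≤ Real.exp (-ν * t) * ‖x‖) :
    (⟪x, A x⟫_ℂ).re ≤ -ν * ‖x‖ ^ 2 := by
  have hf := (hasDerivAt_exp_smul_const_apply A x 0).norm_sq_of_rclike (𝕜 := ℂ)
  have hg : HasDerivAt (fun t : ℝ => (Real.exp (-ν * t) * ‖x‖) ^ 2) (2 * ‖x‖ * (-ν * ‖x‖)) 0 := by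
    have := ((((hasDerivAt_id (0 : ℝ)).const_mul (-ν)).exp).mul_const ‖x‖).fun_pow 2
    simpa using this
  have hderiv := hf.hasDerivWithinAt.le_of_le_of_eq_Ici hg.hasDerivWithinAt
    (fun t ht => pow_le_pow_left₀ (norm_nonneg _) (hdecay t ht) 2) (by simp)
  simp only [zero_smul, exp_zero, one_apply_eq_self, RCLike.re_to_complex] at hderiv
  linarith

end

theorem coercive_of_exponential_decay_prefactor_one_general
    {H : Type*} [NormedAddCommGroup H] [InnerProductSpace ℂ H] [CompleteSpace H]
    (L : H →L[ℂ] H) (ν : ℝ)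
    (Pinf : H →L[ℂ] H)
    (hPmem : ∀ x : H, Pinf x ∈ LinearMap.ker (L : H →ₗ[ℂ] H))
    (hPorth : ∀ x : H, x - Pinf x ∈ (LinearMap.ker (L : H →ₗ[ℂ] H) : Submodule ℂ H)ᗮ)
    (hdecay : ∀ t : ℝ, 0 ≤ t → ∀ x : H,
      ‖NormedSpace.exp (t • L) x - Pinf x‖ ≤ Real.exp (-ν * t) * ‖x - Pinf x‖) :
    ∀ x ∈ (LinearMap.ker (L : H →ₗ[ℂ] H) : Submodule ℂ H)ᗮ, (inner ℂ x (L x) : ℂ).re ≤ -ν * ‖x‖ ^ 2 := by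
  intro x hx
  have hPx : Pinf x = 0 := Submodule.eq_zero_of_mem_of_sub_mem_orthogonal (hPmem x) hx (hPorth x)
  refine re_inner_apply_le_of_norm_exp_smul_apply_le fun t ht => ?_
  simpa [hPx] using hdecay t ht x

/-- If the semigroup `exp(tL)` decays exponentially with prefactor `C = 1`,
i.e. `‖exp(tL)x − P∞x‖ ≤ e^{−νt}‖x − P∞x‖` for all `t ≥ 0` and `x`, where `P∞` is the
orthogonal projection onto `ker L`, then `L` is coercive on `ker(L)ᗮ`:
`Re⟨x, Lx⟩ ≤ −ν‖x‖²` for all `x ∈ ker(L)ᗮ`. -/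
theorem coercive_of_exponential_decay_prefactor_one
    {H : Type*} [NormedAddCommGroup H] [InnerProductSpace ℂ H] [CompleteSpace H]
    (L : H →L[ℂ] H) (ν : ℝ) (hν : 0 < ν)
    (Pinf : H →L[ℂ] H)
    (hPmem : ∀ x : H, Pinf x ∈ LinearMap.ker (L : H →ₗ[ℂ] H))
    (hPorth : ∀ x : H, x - Pinf x ∈ (LinearMap.ker (L : H →ₗ[ℂ] H) : Submodule ℂ H)ᗮ)
    (hdecay : ∀ t : ℝ, 0 ≤ t → ∀ x : H,
      ‖NormedSpace.exp (t • L) x - Pinf x‖ ≤ Real.exp (-ν * t) * ‖x - Pinf x‖) :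
    ∀ x ∈ (LinearMap.ker (L : H →ₗ[ℂ] H) : Submodule ℂ H)ᗮ, (inner ℂ x (L x) : ℂ).re ≤ -ν * ‖x‖ ^ 2 :=
  coercive_of_exponential_decay_prefactor_one_general L ν Pinf hPmem hPorth hdecay
end

section
/- Let H be a complex Hilbert space with a closed subspace H_O and orthogonal projection Π onto H_O. Let L_s be a bounded self-adjoint operator on H satisfying ⟨x, L_s y⟩ = 0 for all x ∈ H_O and all y ∈ H, and the coercivity bound ⟨x, −L_s x⟩ ≥ λ_S ‖x − Πx‖² for all x ∈ H, with λ_S > 0. Then ker(L_s) = H_O, and for every bounded operator L_a on H, every bounded self-adjoint operator L_O on H_O, every bounded positive operator S on H_O^⊥, and every γ > 0: L_a is a second-order lift of L_O with intertwining operator S if and only if L_a + γ L_s is a second-order lift of L_O with intertwining operator S. -/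
/-- A bounded operator `L` on `H` is a *second-order lift* of a bounded operator `LO`
(thought of as an operator on the closed subspace `K = H_O`) with intertwining operator `S`
(thought of as an operator on `Kᗮ`) if (i) `⟨x, Ly⟩ = 0` for all `x, y ∈ K`, and
(ii) `⟨Lx, S(Ly)⟩ = −⟨x, LO y⟩` for all `x, y ∈ K`. -/
def IsSecondOrderLift {H : Type*} [NormedAddCommGroup H] [InnerProductSpace ℂ H]
    (K : Submodule ℂ H) (L LO S : H →L[ℂ] H) : Prop :=
  (∀ x ∈ K, ∀ y ∈ K, (inner ℂ x (L y) : ℂ) = 0) ∧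
  (∀ x ∈ K, ∀ y ∈ K, (inner ℂ (L x) (S (L y)) : ℂ) = -(inner ℂ x (LO y) : ℂ))

theorem isSecondOrderLift_congr {H : Type*} [NormedAddCommGroup H] [InnerProductSpace ℂ H]
    {K : Submodule ℂ H} {L L' : H →L[ℂ] H} (LO S : H →L[ℂ] H)
    (h : ∀ y ∈ K, L y = L' y) :
    IsSecondOrderLift K L LO S ↔ IsSecondOrderLift K L' LO S := by
  unfold IsSecondOrderLift
  constructor
  · rintro ⟨hK, hS⟩
    exact ⟨fun x hx y hy => h y hy ▸ hK x hx y hy,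
      fun x hx y hy => h x hx ▸ h y hy ▸ hS x hx y hy⟩
  · rintro ⟨hK, hS⟩
    exact ⟨fun x hx y hy => (h y hy).symm ▸ hK x hx y hy,
      fun x hx y hy => (h x hx).symm ▸ (h y hy).symm ▸ hS x hx y hy⟩

section

variable {𝕜 E : Type*} [RCLike 𝕜] [NormedAddCommGroup E] [InnerProductSpace 𝕜 E]

theorem LinearMap.IsSymmetric.apply_eq_zero_of_forall_inner_eq_zero {T : E →ₗ[𝕜] E}
    (hT : T.IsSymmetric) {K : Submodule 𝕜 E} (hK : ∀ x ∈ K, ∀ y, inner 𝕜 x (T y) = 0)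
    {y : E} (hy : y ∈ K) : T y = 0 :=
  ext_inner_left 𝕜 fun z => by
    rw [inner_zero_right, ← hT z y, ← inner_conj_symm, hK y hy z, map_zero]

theorem mem_of_apply_eq_zero_of_coercive {T : E →ₗ[𝕜] E} {P : E → E} {K : Submodule 𝕜 E}
    (hPmem : ∀ x, P x ∈ K) {c : ℝ} (hc : 0 < c)
    (hcoer : ∀ x, c * ‖x - P x‖ ^ 2 ≤ RCLike.re (inner 𝕜 x (-(T x))))
    {x : E} (hx : T x = 0) : x ∈ K := by
  have hle : c * ‖x - P x‖ ^ 2 ≤ 0 := by simpa [hx] using hcoer x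
  have hzero : x - P x = 0 :=
    norm_eq_zero.mp (pow_eq_zero_iff two_ne_zero |>.mp
      (le_antisymm (nonpos_of_mul_nonpos_right hle hc) (by positivity)))
  exact sub_eq_zero.mp hzero ▸ hPmem x

end

theorem lift_invariant_under_adding_symmetric_part_general
    {H : Type*} [NormedAddCommGroup H] [InnerProductSpace ℂ H] [CompleteSpace H]
    (K : Submodule ℂ H)
    (P : H →L[ℂ] H) (hPmem : ∀ x : H, P x ∈ K)
    (Ls : H →L[ℂ] H) (hLs_sa : IsSelfAdjoint Ls)
    (hLs_orth : ∀ x ∈ K, ∀ y : H, (inner ℂ x (Ls y) : ℂ) = 0)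
    (lamS : ℝ) (hlamS : 0 < lamS)
    (hcoer : ∀ x : H, lamS * ‖x - P x‖ ^ 2 ≤ (inner ℂ x (-(Ls x)) : ℂ).re) :
    (LinearMap.ker (Ls : H →ₗ[ℂ] H) : Submodule ℂ H) = K ∧
    ∀ (La LO S : H →L[ℂ] H),
      (∀ x ∈ K, LO x ∈ K) →
      (∀ x ∈ K, ∀ y ∈ K, (inner ℂ x (LO y) : ℂ) = inner ℂ (LO x) y) →
      (∀ x ∈ Kᗮ, S x ∈ Kᗮ) →
      (∀ x ∈ Kᗮ, 0 ≤ (inner ℂ x (S x) : ℂ).re ∧ (inner ℂ x (S x) : ℂ).im = 0) →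
      ∀ γ : ℝ, 0 < γ →
        (IsSecondOrderLift K La LO S ↔ IsSecondOrderLift K (La + (γ : ℂ) • Ls) LO S) := by
  have hsymm := ContinuousLinearMap.isSelfAdjoint_iff_isSymmetric.mp hLs_sa
  have hvanish : ∀ y ∈ K, Ls y = 0 := fun _ hy =>
    hsymm.apply_eq_zero_of_forall_inner_eq_zero hLs_orth hy
  refine ⟨le_antisymm (fun x hx => ?_) hvanish, fun La LO S _ _ _ _ γ _ => ?_⟩
  · exact mem_of_apply_eq_zero_of_coercive hPmem hlamS hcoer hx
  · exact isSecondOrderLift_congr LO S fun y hy => by simp [hvanish y hy]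

/-- If `L_s` is bounded self-adjoint with `⟨x, L_s y⟩ = 0` for all
`x ∈ H_O`, `y ∈ H`, and coercive: `⟨x, −L_s x⟩ ≥ λ_S‖x − Πx‖²` with `λ_S > 0` (`Π` the
orthogonal projection onto the closed subspace `H_O`), then `ker L_s = H_O`, and for every
bounded `L_a`, every bounded self-adjoint `L_O` on `H_O`, every bounded positive `S` on
`H_Oᗮ` and every `γ > 0`: `L_a` is a second-order lift of `L_O` with intertwining operator
`S` iff `L_a + γL_s` is. -/
theorem lift_invariant_under_adding_symmetric_part
    {H : Type*} [NormedAddCommGroup H] [InnerProductSpace ℂ H] [CompleteSpace H]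
    (K : Submodule ℂ H) (hKclosed : IsClosed (K : Set H))
    (P : H →L[ℂ] H) (hPmem : ∀ x : H, P x ∈ K) (hPorth : ∀ x : H, x - P x ∈ Kᗮ)
    (Ls : H →L[ℂ] H) (hLs_sa : IsSelfAdjoint Ls)
    (hLs_orth : ∀ x ∈ K, ∀ y : H, (inner ℂ x (Ls y) : ℂ) = 0)
    (lamS : ℝ) (hlamS : 0 < lamS)
    (hcoer : ∀ x : H, lamS * ‖x - P x‖ ^ 2 ≤ (inner ℂ x (-(Ls x)) : ℂ).re) :
    (LinearMap.ker (Ls : H →ₗ[ℂ] H) : Submodule ℂ H) = K ∧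
    ∀ (La LO S : H →L[ℂ] H),
      (∀ x ∈ K, LO x ∈ K) →
      (∀ x ∈ K, ∀ y ∈ K, (inner ℂ x (LO y) : ℂ) = inner ℂ (LO x) y) →
      (∀ x ∈ Kᗮ, S x ∈ Kᗮ) →
      (∀ x ∈ Kᗮ, 0 ≤ (inner ℂ x (S x) : ℂ).re ∧ (inner ℂ x (S x) : ℂ).im = 0) →
      ∀ γ : ℝ, 0 < γ →
        (IsSecondOrderLift K La LO S ↔ IsSecondOrderLift K (La + (γ : ℂ) • Ls) LO S) :=
  lift_invariant_under_adding_symmetric_part_general K P hPmem Ls hLs_sa hLs_orth lamS hlamS hcoer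
end
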